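/- Let D = (d_1, ..., d_n) be a nonincreasing sequence of positive integers with d_1 < n, and let j > d_1 + 1. Then D is graphic if and only if the sequence D' obtained from D by subtracting 1 from d_1 and from d_j (then reordering nonincreasingly and removing zeros) is graphic. -/

import Mathlib

/-!
A 2-switch, which trades edges `ab`, `cd` for the non-edges `ac`, `bd`, changes no degree.
If `G` realises `D`, let `u` and `v` be vertices of degrees `d₁` and `dⱼ`. Since `u` has
maximum degree and `v` has a neighbour, a 2-switch makes `u` and `v` adjacent, and deleting
the edge `uv` realises `D'`. Conversely, let `G` realise `D'` with `u`, `v` of degrees `d₁ - 1`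
and `dⱼ - 1`. If `uv` is an edge, then among the at least `j - 2 ≥ d₁` vertices other than `u`
of degree `≥ dⱼ` some `w` is not adjacent to `u`, which has only `d₁ - 1` neighbours; as `w`
has more neighbours than `v`, a 2-switch through `w` removes the edge `uv`. Adding it back
realises `D`.
-/

/-- A finite sequence of natural numbers (possibly containing zeros) is graphic if
it is, up to permutation, the degree sequence of a simple graph on `l.length` vertices.
(Zero entries correspond to isolated vertices, so this also captures graphicness
after removal of zeros.) -/
def IsGraphic (l : List ℕ) : Prop :=
  ∃ G : SimpleGraph (Fin l.length),
    List.Perm (List.ofFn fun v => Nat.card (G.neighborSet v)) l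

open Finset

namespace Finset

variable {α β : Type*} [DecidableEq α] {s : Finset α} {f : α → β}

lemma map_val_eq_cons_erase {a : α} (ha : a ∈ s) (f : α → β) :
    s.val.map f = f a ::ₘ (s.erase a).val.map f := by
  rw [← Multiset.map_cons, erase_val, Multiset.cons_erase ha]

lemma exists_mem_map_erase_eq_of_map_val_eq_cons {b : β} {M : Multiset β}
    (h : s.val.map f = b ::ₘ M) : ∃ a ∈ s, f a = b ∧ (s.erase a).val.map f = M := by
  obtain ⟨a, ha, rfl⟩ := Multiset.mem_map.mp (h ▸ Multiset.mem_cons_self b M)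
  exact ⟨a, ha, rfl, (Multiset.cons_inj_right _).mp ((map_val_eq_cons_erase ha f).symm.trans h)⟩

lemma map_val_eq_cons_cons_of_eq {a b : α} (ha : a ∈ s) (hb : b ∈ s.erase a) {g : α → β}
    (hfg : ∀ x, x ≠ a → x ≠ b → f x = g x) :
    s.val.map f = f a ::ₘ f b ::ₘ ((s.erase a).erase b).val.map g := by
  rw [map_val_eq_cons_erase ha, map_val_eq_cons_erase hb]
  refine congrArg _ (congrArg _ (Multiset.map_congr rfl fun x hx => ?_))
  obtain ⟨hxb, hxa, -⟩ := by simpa only [← Finset.mem_def, mem_erase] using hx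
  exact hfg x hxa hxb

end Finset

lemma Fin.univ_val_map_succ_eq_Icc {β : Type*} (n : ℕ) (f : ℕ → β) :
    univ.val.map (fun i : Fin n => f (i.1 + 1)) = (Icc 1 n).val.map f := by
  have h : (univ : Finset (Fin n)).map (Fin.valEmbedding.trans (addRightEmbedding 1)) =
      Icc 1 n := by
    rw [← map_map, Fin.map_valEmbedding_univ, Nat.Iio_eq_range, range_eq_Ico,
      map_add_right_Ico, zero_add, Ico_add_one_right_eq_Icc]
  rw [← h, map_val, Multiset.map_map]
  rfl

namespace SimpleGraph

variable {V : Type*} {G : SimpleGraph V} {u v : V}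

lemma ncard_neighborSet_sup_edge [Finite V] [DecidableEq V] (huv : u ≠ v) (h : ¬G.Adj u v)
    (w : V) :
    ((G ⊔ edge u v).neighborSet w).ncard =
      (G.neighborSet w).ncard + (if w = u then 1 else 0) + (if w = v then 1 else 0) := by
  rcases eq_or_ne w u with rfl | hwu
  · have hN : (G ⊔ edge w v).neighborSet w = insert v (G.neighborSet w) := by
      ext x; simp only [mem_neighborSet, sup_adj, edge_adj, Set.mem_insert_iff]; grind
    rw [hN, Set.ncard_insert_of_notMem (show v ∉ G.neighborSet w from h)]
    simp [huv]
  rcases eq_or_ne w v with rfl | hwv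
  · have hN : (G ⊔ edge u w).neighborSet w = insert u (G.neighborSet w) := by
      ext x; simp only [mem_neighborSet, sup_adj, edge_adj, Set.mem_insert_iff]; grind
    rw [hN, Set.ncard_insert_of_notMem (show u ∉ G.neighborSet w from fun h' => h h'.symm)]
    simp [hwu]
  · have hN : (G ⊔ edge u v).neighborSet w = G.neighborSet w := by
      ext x; simp [edge_adj, hwu, hwv]
    simp [hN, hwu, hwv]

lemma ncard_neighborSet_eq_sdiff_edge [Finite V] [DecidableEq V] (h : G.Adj u v) (w : V) :
    (G.neighborSet w).ncard =
      ((G \ edge u v).neighborSet w).ncard + (if w = u then 1 else 0) +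
        (if w = v then 1 else 0) := by
  conv_lhs => rw [← sdiff_sup_cancel ((edge_le_iff G).mpr (Or.inr h))]
  exact ncard_neighborSet_sup_edge h.ne (by simp [edge_adj, h.ne]) w

theorem exists_switch [Finite V] {a b c d : V} (hab : G.Adj a b) (hcd : G.Adj c d)
    (hac : a ≠ c) (hbd : b ≠ d) (hnac : ¬G.Adj a c) (hnbd : ¬G.Adj b d) :
    ∃ G' : SimpleGraph V, (∀ w, (G'.neighborSet w).ncard = (G.neighborSet w).ncard) ∧
      G'.Adj a c ∧ ¬G'.Adj a b := by
  classical
  have had : a ≠ d := by rintro rfl; exact hnbd hab.symm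
  have hbc : b ≠ c := by rintro rfl; exact hnac hab
  have hcd' : (G \ edge a b).Adj c d := by simp [edge_adj, hcd, hac.symm, hbc.symm]
  have hnac' : ¬((G \ edge a b) \ edge c d).Adj a c := by simp [hnac]
  have hnbd' : ¬((G \ edge a b) \ edge c d ⊔ edge a c).Adj b d := by
    simp [edge_adj, hnbd, hab.ne.symm, hbc]
  refine ⟨(G \ edge a b) \ edge c d ⊔ edge a c ⊔ edge b d, fun w => ?_, ?_, ?_⟩
  · have := ncard_neighborSet_eq_sdiff_edge hab w
    have := ncard_neighborSet_eq_sdiff_edge hcd' w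
    have := ncard_neighborSet_sup_edge hac hnac' w
    have := ncard_neighborSet_sup_edge hbd hnbd' w
    omega
  · simp [edge_adj, hac]
  · simp [edge_adj, hab.ne, had, hbc, hac]

theorem exists_adj_of_forall_ncard_le [Finite V] (huv : u ≠ v)
    (hmax : ∀ w, (G.neighborSet w).ncard ≤ (G.neighborSet u).ncard)
    (hv : (G.neighborSet v).Nonempty) :
    ∃ G' : SimpleGraph V, (∀ w, (G'.neighborSet w).ncard = (G.neighborSet w).ncard) ∧
      G'.Adj u v := by
  by_cases huv' : G.Adj u v
  · exact ⟨G, fun _ => rfl, huv'⟩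
  obtain ⟨w, hvw⟩ := hv
  obtain ⟨x, hux, hwx, hxw⟩ : ∃ x, G.Adj u x ∧ ¬G.Adj w x ∧ x ≠ w := by
    by_contra! hcon
    have hsub : G.neighborSet u ⊆ insert w (G.neighborSet w \ {v}) := fun x hux =>
      or_iff_not_imp_left.mpr fun hxw =>
        ⟨not_not.mp fun h => hxw (hcon x hux h), by rintro rfl; exact huv' hux⟩
    have hcard : (insert w (G.neighborSet w \ {v})).ncard ≤ (G.neighborSet u).ncard := by
      have h₁ := Set.ncard_insert_le w (G.neighborSet w \ {v})
      have h₂ := Set.ncard_sdiff_singleton_add_one (show v ∈ G.neighborSet w from hvw.symm)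
      have h₃ := hmax w
      omega
    -- equality of the two sets puts `w` in `N(u)`, hence `u` in `N(w) \ {v} ⊆ N(u)`
    have heq := Set.eq_of_subset_of_ncard_le hsub hcard
    have hwN : w ∈ G.neighborSet u := heq ▸ Set.mem_insert w _
    exact G.irrefl (heq ▸ Or.inr ⟨hwN.symm, huv⟩ : u ∈ G.neighborSet u)
  obtain ⟨G', hdeg, hadj, -⟩ := exists_switch hux hvw huv hxw huv' fun h => hwx h.symm
  exact ⟨G', hdeg, hadj⟩

theorem exists_not_adj_of_ncard_lt [Finite V] {w : V} (huv : G.Adj u v) (hwu : w ≠ u)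
    (huw : ¬G.Adj u w) (hlt : (G.neighborSet v).ncard < (G.neighborSet w).ncard) :
    ∃ G' : SimpleGraph V, (∀ x, (G'.neighborSet x).ncard = (G.neighborSet x).ncard) ∧
      ¬G'.Adj u v := by
  have hcard : (insert v (G.neighborSet v \ {u})).ncard < (G.neighborSet w).ncard := by
    have h₁ := Set.ncard_insert_le v (G.neighborSet v \ {u})
    have h₂ := Set.ncard_sdiff_singleton_add_one (show u ∈ G.neighborSet v from huv.symm)
    omega
  obtain ⟨y, hwy, hy⟩ := Set.exists_mem_notMem_of_ncard_lt_ncard hcard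
  have hyu : y ≠ u := by rintro rfl; exact huw hwy.symm
  simp only [Set.mem_insert_iff, Set.mem_sdiff, Set.mem_singleton_iff, not_or,
    not_and_not_right] at hy
  obtain ⟨G', hdeg, -, hnadj⟩ :=
    exists_switch huv hwy hwu.symm (Ne.symm hy.1) huw fun h => hyu (hy.2 h)
  exact ⟨G', hdeg, hnadj⟩

section DegreeMultiset

variable [Fintype V]

noncomputable def degreeMultiset (G : SimpleGraph V) : Multiset ℕ :=
  univ.val.map fun v => (G.neighborSet v).ncard

variable {a b : ℕ} {M : Multiset ℕ}

theorem exists_degreeMultiset_pred_cons_pred_cons (hG : G.degreeMultiset = a ::ₘ b ::ₘ M)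
    (hb : 1 ≤ b) (hba : b ≤ a) (hM : ∀ x ∈ M, x ≤ a) :
    ∃ G' : SimpleGraph V, G'.degreeMultiset = (a - 1) ::ₘ (b - 1) ::ₘ M := by
  classical
  obtain ⟨u, -, hu, hG'⟩ := exists_mem_map_erase_eq_of_map_val_eq_cons hG
  obtain ⟨v, hv, hvb, hrest⟩ := exists_mem_map_erase_eq_of_map_val_eq_cons hG'
  have huv : u ≠ v := (ne_of_mem_erase hv).symm
  have hmax : ∀ w, (G.neighborSet w).ncard ≤ (G.neighborSet u).ncard := fun w => by
    have hw : _ ∈ G.degreeMultiset := Multiset.mem_map_of_mem _ (mem_univ_val w)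
    rw [hG, Multiset.mem_cons, Multiset.mem_cons] at hw
    rcases hw with hw | hw | hw
    · omega
    · omega
    · exact hu ▸ hM _ hw
  obtain ⟨G₁, hdeg, hadj⟩ := exists_adj_of_forall_ncard_le huv hmax
    (Set.nonempty_of_ncard_ne_zero (by omega))
  have hdel := fun w => (hdeg w).symm.trans (ncard_neighborSet_eq_sdiff_edge hadj w)
  refine ⟨G₁ \ edge u v, ?_⟩
  rw [degreeMultiset, map_val_eq_cons_cons_of_eq (mem_univ u) hv fun w hwu hwv => by
    simpa [hwu, hwv] using (hdel w).symm, hrest]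
  have hu' := hdel u
  have hv' := hdel v
  simp only [if_true, if_neg huv, if_neg huv.symm] at hu' hv'
  congr 2 <;> omega

theorem exists_degreeMultiset_cons_cons_of_pred (hG : G.degreeMultiset = (a - 1) ::ₘ (b - 1) ::ₘ M)
    (ha : 1 ≤ a) (hb : 1 ≤ b) (hcount : a ≤ M.countP (b ≤ ·)) :
    ∃ G' : SimpleGraph V, G'.degreeMultiset = a ::ₘ b ::ₘ M := by
  classical
  obtain ⟨u, -, hu, hG'⟩ := exists_mem_map_erase_eq_of_map_val_eq_cons hG
  obtain ⟨v, hv, hvb, hrest⟩ := exists_mem_map_erase_eq_of_map_val_eq_cons hG'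
  have huv : u ≠ v := (ne_of_mem_erase hv).symm
  obtain ⟨G₁, hdeg, hnadj⟩ : ∃ G₁ : SimpleGraph V,
      (∀ w, (G₁.neighborSet w).ncard = (G.neighborSet w).ncard) ∧ ¬G₁.Adj u v := by
    by_cases hadj : G.Adj u v
    swap
    · exact ⟨G, fun _ => rfl, hadj⟩
    obtain ⟨w, hwS, hwN⟩ : ∃ w ∈ (univ.erase u).filter (fun w => b ≤ (G.neighborSet w).ncard),
        w ∉ (G.neighborSet u).toFinset := by
      apply exists_mem_notMem_of_card_lt_card
      calc #(G.neighborSet u).toFinset = a - 1 := by rw [← Set.ncard_eq_toFinset_card', hu]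
        _ < a := by omega
        _ ≤ M.countP (b ≤ ·) := hcount
        _ ≤ ((b - 1) ::ₘ M).countP (b ≤ ·) :=
          Multiset.countP_le_of_le _ (Multiset.le_cons_self _ _)
        _ = #((univ.erase u).filter _) := by rw [← hG', Multiset.countP_map]; rfl
    obtain ⟨hwu, -⟩ := mem_erase.mp (mem_filter.mp hwS).1
    have hbw := (mem_filter.mp hwS).2
    exact exists_not_adj_of_ncard_lt hadj hwu (by simpa using hwN) (by omega)
  have hadd := fun w => (ncard_neighborSet_sup_edge huv hnadj w).trans (by rw [hdeg w])
  refine ⟨G₁ ⊔ edge u v, ?_⟩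
  rw [degreeMultiset, map_val_eq_cons_cons_of_eq (mem_univ u) hv fun w hwu hwv => by
    simpa [hwu, hwv] using hadd w, hrest]
  have hu' := hadd u
  have hv' := hadd v
  simp only [if_true, if_neg huv, if_neg huv.symm] at hu' hv'
  congr 2 <;> omega

theorem exists_degreeMultiset_cons_cons_iff (hb : 1 ≤ b) (hba : b ≤ a) (hM : ∀ x ∈ M, x ≤ a)
    (hcount : a ≤ M.countP (b ≤ ·)) :
    (∃ G : SimpleGraph V, G.degreeMultiset = a ::ₘ b ::ₘ M) ↔
      ∃ G : SimpleGraph V, G.degreeMultiset = (a - 1) ::ₘ (b - 1) ::ₘ M :=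
  ⟨fun ⟨_, hG⟩ => exists_degreeMultiset_pred_cons_pred_cons hG hb hba hM,
    fun ⟨_, hG⟩ => exists_degreeMultiset_cons_cons_of_pred hG (hb.trans hba) hb hcount⟩

end DegreeMultiset

end SimpleGraph

open SimpleGraph

lemma isGraphic_ofFn_iff {n : ℕ} (f : Fin n → ℕ) :
    IsGraphic (List.ofFn f) ↔ ∃ G : SimpleGraph (Fin n), G.degreeMultiset = univ.val.map f := by
  rw [IsGraphic, List.length_ofFn]
  simp only [degreeMultiset, Fin.univ_val_map, Multiset.coe_eq_coe, Nat.card_coe_set_eq]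

theorem stmt_4_general (n : ℕ) (d : ℕ → ℕ)
    (hpos : ∀ i, 1 ≤ i → i ≤ n → 1 ≤ d i)
    (hmono : ∀ i j, 1 ≤ i → i ≤ j → j ≤ n → d j ≤ d i)
    (j : ℕ) (hj : d 1 + 1 < j) (hjn : j ≤ n) :
    IsGraphic (List.ofFn fun i : Fin n => d (i.1 + 1)) ↔
      IsGraphic (List.ofFn fun i : Fin n =>
        if i.1 + 1 = 1 ∨ i.1 + 1 = j then d (i.1 + 1) - 1 else d (i.1 + 1)) := by
  have h₁ : 1 ∈ Icc 1 n := mem_Icc.mpr ⟨le_rfl, by omega⟩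
  have hⱼ : j ∈ (Icc 1 n).erase 1 := mem_erase.mpr ⟨by omega, mem_Icc.mpr ⟨by omega, hjn⟩⟩
  set M := (((Icc 1 n).erase 1).erase j).val.map d
  have hM : ∀ x ∈ M, x ≤ d 1 := by
    simp only [M, Multiset.mem_map, ← Finset.mem_def, mem_erase, mem_Icc]
    rintro _ ⟨i, ⟨-, -, hi⟩, rfl⟩
    exact hmono 1 i le_rfl hi.1 hi.2
  have hcount : d 1 ≤ M.countP (d j ≤ ·) := by
    rw [Multiset.countP_map]
    calc d 1 ≤ #(Ioo 1 j) := by rw [Nat.card_Ioo]; omega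
      _ ≤ #((((Icc 1 n).erase 1).erase j).filter (d j ≤ d ·)) := card_le_card fun i hi => by
        simp only [mem_Ioo] at hi
        simp only [mem_filter, mem_erase, mem_Icc]
        exact ⟨⟨by omega, by omega, by omega, by omega⟩, hmono i j (by omega) hi.2.le hjn⟩
  rw [isGraphic_ofFn_iff, isGraphic_ofFn_iff, Fin.univ_val_map_succ_eq_Icc n d,
    Fin.univ_val_map_succ_eq_Icc n fun k => if k = 1 ∨ k = j then d k - 1 else d k,
    map_val_eq_cons_cons_of_eq h₁ hⱼ fun _ _ _ => rfl,
    map_val_eq_cons_cons_of_eq h₁ hⱼ (g := d) fun _ h₁ hⱼ => if_neg (not_or.mpr ⟨h₁, hⱼ⟩)]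
  simp only [true_or, or_true, if_true]
  exact exists_degreeMultiset_cons_cons_iff (hpos j (by omega) hjn)
    (hmono 1 j le_rfl (by omega) hjn) hM hcount

/-- Case (3) of the 2-Reduction Lemma with `i = 1`: for `j > d 1 + 1` (and `j ≤ n`),
`D` is graphic iff the sequence obtained by subtracting `1` from `d 1` and from `d j`
is graphic. -/
theorem stmt_4 (n : ℕ) (d : ℕ → ℕ) (hn : 1 ≤ n)
    (hpos : ∀ i, 1 ≤ i → i ≤ n → 1 ≤ d i)
    (hmono : ∀ i j, 1 ≤ i → i ≤ j → j ≤ n → d j ≤ d i)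
    (h1 : d 1 < n)
    (j : ℕ) (hj : d 1 + 1 < j) (hjn : j ≤ n) :
    IsGraphic (List.ofFn fun i : Fin n => d (i.1 + 1)) ↔
      IsGraphic (List.ofFn fun i : Fin n =>
        if i.1 + 1 = 1 ∨ i.1 + 1 = j then d (i.1 + 1) - 1 else d (i.1 + 1)) :=
  stmt_4_general n d hpos hmono j hj hjn
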